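/- arXiv:2602.07726 — 3 statements merged into one kernel-verified Lean document; each statement's English description precedes it below -/
import Mathlib

section
/- Suppose n ≥ 4 is an integer and the partition function p(n) satisfies μ(n) + log(√3/(12n) - √3/(12 n^{3/2})) < log(p(n)) < μ(n) + log(√3/(12n) + √3/(12 n^{3/2})), where μ(n) = (π/6)√(24n-1). Then |log(p(n)) - ((π√24/6)·√n - log(n) + log(√3/12))| ≤ 4/√n. -/
/-!
Write `ε = 1 / √n ≤ 1 / 2`. Since `n ^ (3/2) = n √n`, the two bounds read
`μ(n) + log (√3 / 12) - log n + log (1 ± ε)`, and `log (1 + ε) ≤ ε`, `log (1 - ε) ≥ -2ε`.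
Replacing `μ(n)` by `(π/6) √(24n)` costs at most
`(π/6) (√(24n) - √(24n - 1)) ≤ (π/6) / √(24n) ≤ ε`, so the error lies in `[-3ε, ε]`.
-/

open Real

lemma Real.rpow_three_halves {x : ℝ} (hx : 0 ≤ x) : x ^ ((3 : ℝ) / 2) = x * √x := by
  rw [show (3 : ℝ) / 2 = 1 + 1 / 2 by norm_num, rpow_add' hx (by norm_num), rpow_one,
    ← sqrt_eq_rpow]

lemma Real.neg_two_mul_le_log_one_sub {x : ℝ} (hx₀ : 0 ≤ x) (hx : x ≤ 1 / 2) :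
    -(2 * x) ≤ log (1 - x) := by
  have hpos : 0 < 1 - x := by linarith
  have hinv : (1 - x)⁻¹ ≤ 1 + 2 * x := by
    rw [inv_le_iff_one_le_mul₀' hpos]; nlinarith
  linarith [one_sub_inv_le_log_of_pos hpos]

lemma Real.sqrt_sub_sqrt_le_div {a b : ℝ} (hb : 0 ≤ b) (hba : b ≤ a) :
    √a - √b ≤ (a - b) / √a := by
  rcases (sqrt_nonneg a).eq_or_lt with ha | ha
  · have hb' : √b = 0 := sqrt_eq_zero'.mpr (hba.trans (sqrt_eq_zero'.mp ha.symm))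
    simp [← ha, hb']
  · rw [le_div_iff₀ ha]
    have hab : √b ≤ √a := sqrt_le_sqrt hba
    nlinarith [mul_self_sqrt hb, mul_self_sqrt (hb.trans hba), sqrt_nonneg b]

lemma div_add_div_rpow_three_halves (c : ℝ) {x : ℝ} (hx : 0 < x) :
    c / (12 * x) + c / (12 * x ^ ((3 : ℝ) / 2)) = c / 12 / x * (1 + 1 / √x) := by
  have := sqrt_pos.mpr hx
  rw [rpow_three_halves hx.le]; field_simp

lemma div_sub_div_rpow_three_halves (c : ℝ) {x : ℝ} (hx : 0 < x) :
    c / (12 * x) - c / (12 * x ^ ((3 : ℝ) / 2)) = c / 12 / x * (1 - 1 / √x) := by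
  have := sqrt_pos.mpr hx
  rw [rpow_three_halves hx.le]; field_simp

lemma Real.log_div_mul {c x z : ℝ} (hc : c ≠ 0) (hx : x ≠ 0) (hz : z ≠ 0) :
    log (c / x * z) = log c - log x + log z := by
  rw [log_mul (div_ne_zero hc hx) hz, log_div hc hx]

lemma pi_div_six_mul_sqrt_sub_sqrt_sub_one_le {x : ℝ} (hx : 1 / 24 ≤ x) :
    π / 6 * (√(24 * x) - √(24 * x - 1)) ≤ 1 / √x := by
  have hx₀ : 0 < √x := sqrt_pos.mpr (by linarith)
  have hgap : √(24 * x) - √(24 * x - 1) ≤ 1 / √(24 * x) := by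
    have := sqrt_sub_sqrt_le_div (a := 24 * x) (b := 24 * x - 1) (by linarith) (by linarith)
    rwa [sub_sub_cancel] at this
  calc π / 6 * (√(24 * x) - √(24 * x - 1))
      ≤ 1 * (1 / √(24 * x)) :=
        mul_le_mul (by linarith [pi_le_four]) hgap
          (sub_nonneg.mpr (sqrt_le_sqrt (by linarith))) zero_le_one
    _ ≤ 1 / √x := by
        rw [one_mul]
        exact one_div_le_one_div_of_le hx₀ (sqrt_le_sqrt (by linarith))

theorem log_partition_approx (n : ℕ) (hn : 4 ≤ n)
    (h1 : π / 6 * Real.sqrt (24 * n - 1) +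
        Real.log (Real.sqrt 3 / (12 * n) - Real.sqrt 3 / (12 * (n : ℝ) ^ ((3 : ℝ) / 2))) <
      Real.log (Fintype.card (Nat.Partition n)))
    (h2 : Real.log (Fintype.card (Nat.Partition n)) <
      π / 6 * Real.sqrt (24 * n - 1) +
        Real.log (Real.sqrt 3 / (12 * n) + Real.sqrt 3 / (12 * (n : ℝ) ^ ((3 : ℝ) / 2)))) :
    |Real.log (Fintype.card (Nat.Partition n)) -
        (π * Real.sqrt 24 / 6 * Real.sqrt n - Real.log n + Real.log (Real.sqrt 3 / 12))| ≤
      4 / Real.sqrt n := by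
  have hn₄ : (4 : ℝ) ≤ n := by exact_mod_cast hn
  have hn₀ : (0 : ℝ) < n := by linarith
  have hε : 1 / √n ≤ 1 / 2 := by
    rw [show (2 : ℝ) = √4 by rw [show (4 : ℝ) = 2 ^ 2 by norm_num, sqrt_sq zero_le_two]]
    exact one_div_le_one_div_of_le (by norm_num) (sqrt_le_sqrt hn₄)
  have hε₀ : 0 < 1 / √n := by positivity
  have hc : √3 / 12 ≠ 0 := by positivity
  rw [div_sub_div_rpow_three_halves _ hn₀, log_div_mul hc hn₀.ne' (by linarith)] at h1
  rw [div_add_div_rpow_three_halves _ hn₀, log_div_mul hc hn₀.ne' (by linarith)] at h2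
  have hlog_add : log (1 + 1 / √n) ≤ 1 / √n := by
    linarith [log_le_sub_one_of_pos (show 0 < 1 + 1 / √n by linarith)]
  have hlog_sub := neg_two_mul_le_log_one_sub hε₀.le hε
  have hμ := pi_div_six_mul_sqrt_sub_sqrt_sub_one_le (x := n) (by linarith)
  have hμ₀ : π / 6 * √(24 * n - 1) ≤ π / 6 * √(24 * n) :=
    mul_le_mul_of_nonneg_left (sqrt_le_sqrt (by linarith)) (by positivity)
  have hmain : π * √24 / 6 * √n = π / 6 * √(24 * n) := by
    rw [sqrt_mul (by norm_num)]; ring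
  rw [abs_le, hmain, show 4 / √n = 4 * (1 / √n) by ring]
  constructor <;> linarith
end

section
/- Let 0 < θ < 1, c₁ > 0, c₂ < 0, c₃ ∈ ℝ and h(x) = c₁ x^θ + c₂ log x + c₃. Let D = 2/(c₁ 2^{θ-1} θ), L₁ = ((-3c₂)/(c₁θ))^{1/θ}, L₃ = D^{1/θ}. Then for all x ≥ max{L₁, L₃}, one has h(x + D x^{1-θ}) - h(x) ≥ 4/3. -/
/-!
For `t ≥ L₁` the logarithmic part of `h' t = c₁ θ t^(θ-1) + c₂ / t` costs at most a third of the
power part, so `h' t ≥ (2/3) c₁ θ t^(θ-1)`. Since `x ≥ L₃` gives `D ≤ x^θ`, the step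
`D x^(1-θ)` is at most `x`, so on `[x, x + D x^(1-θ)] ⊆ [x, 2x]` we have
`h' ≥ (2/3) c₁ θ (2x)^(θ-1)`; by the mean value theorem the increment is at least this bound times
the step, which is `4/3` by the choice of `D`.
-/

open Real Set

noncomputable def powLog (θ c₁ c₂ c₃ t : ℝ) : ℝ := c₁ * t ^ θ + c₂ * log t + c₃

section PowLog

variable {θ c₁ c₂ c₃ t : ℝ}

theorem hasDerivAt_powLog (ht : 0 < t) :
    HasDerivAt (powLog θ c₁ c₂ c₃) (c₁ * θ * t ^ (θ - 1) + c₂ / t) t := by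
  have hpow := (hasDerivAt_rpow_const (p := θ) (Or.inl ht.ne')).const_mul c₁
  have hlog := (hasDerivAt_log ht.ne').const_mul c₂
  exact ((hpow.add hlog).add_const c₃).congr_deriv (by ring)

theorem two_thirds_mul_le_deriv_powLog (ht : 0 < t) (hbound : -3 * c₂ ≤ c₁ * θ * t ^ θ) :
    2 / 3 * (c₁ * θ * t ^ (θ - 1)) ≤ c₁ * θ * t ^ (θ - 1) + c₂ / t := by
  have key : 0 ≤ (c₁ * θ * t ^ θ / 3 + c₂) / t := div_nonneg (by linarith) ht.le
  rw [rpow_sub_one ht.ne']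
  calc 2 / 3 * (c₁ * θ * (t ^ θ / t))
      ≤ 2 / 3 * (c₁ * θ * (t ^ θ / t)) + (c₁ * θ * t ^ θ / 3 + c₂) / t := by linarith
    _ = c₁ * θ * (t ^ θ / t) + c₂ / t := by field_simp; ring

theorem powLog_sub_ge {x y : ℝ} (hθ0 : 0 < θ) (hθ1 : θ ≤ 1) (hc₁ : 0 ≤ c₁) (hx : 0 < x)
    (hxy : x ≤ y) (hy : y ≤ 2 * x) (hbound : -3 * c₂ ≤ c₁ * θ * x ^ θ) :
    2 / 3 * (c₁ * θ * (2 * x) ^ (θ - 1)) * (y - x) ≤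
      powLog θ c₁ c₂ c₃ y - powLog θ c₁ c₂ c₃ x := by
  have hderiv : ∀ t ∈ Icc x y, HasDerivAt (powLog θ c₁ c₂ c₃)
      (c₁ * θ * t ^ (θ - 1) + c₂ / t) t := fun t ht => hasDerivAt_powLog (hx.trans_le ht.1)
  refine (convex_Icc x y).mul_sub_le_image_sub_of_le_deriv
    (fun t ht => (hderiv t ht).continuousAt.continuousWithinAt)
    (fun t ht => (hderiv t (interior_subset ht)).differentiableAt.differentiableWithinAt)
    (fun t ht => ?_) x (left_mem_Icc.2 hxy) y (right_mem_Icc.2 hxy) hxy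
  obtain ⟨hxt, hty⟩ := interior_subset ht
  have ht0 : 0 < t := hx.trans_le hxt
  have hcθ : 0 ≤ c₁ * θ := mul_nonneg hc₁ hθ0.le
  have hbound_t : -3 * c₂ ≤ c₁ * θ * t ^ θ :=
    hbound.trans (mul_le_mul_of_nonneg_left (rpow_le_rpow hx.le hxt hθ0.le) hcθ)
  have hpow_t : (2 * x) ^ (θ - 1) ≤ t ^ (θ - 1) :=
    rpow_le_rpow_of_nonpos ht0 (hty.trans hy) (by linarith)
  rw [(hderiv t (interior_subset ht)).deriv]
  calc 2 / 3 * (c₁ * θ * (2 * x) ^ (θ - 1))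
      ≤ 2 / 3 * (c₁ * θ * t ^ (θ - 1)) := by gcongr
    _ ≤ c₁ * θ * t ^ (θ - 1) + c₂ / t := two_thirds_mul_le_deriv_powLog ht0 hbound_t

end PowLog

theorem h_increment_ge (θ c₁ c₂ c₃ : ℝ) (hθ0 : 0 < θ) (hθ1 : θ < 1)
    (hc₁ : 0 < c₁) (hc₂ : c₂ < 0) (D L₁ L₃ : ℝ)
    (hD : D = 2 / (c₁ * 2 ^ (θ - 1) * θ))
    (hL₁ : L₁ = ((-3 * c₂) / (c₁ * θ)) ^ (1 / θ))
    (hL₃ : L₃ = D ^ (1 / θ))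
    (x : ℝ) (hx : x ≥ max L₁ L₃) :
    (c₁ * (x + D * x ^ (1 - θ)) ^ θ + c₂ * Real.log (x + D * x ^ (1 - θ)) + c₃) -
      (c₁ * x ^ θ + c₂ * Real.log x + c₃) ≥ 4 / 3 := by
  obtain ⟨hxL₁, hxL₃⟩ := max_le_iff.1 hx
  have hD0 : 0 < D := by rw [hD]; positivity
  have hx0 : 0 < x := lt_of_lt_of_le (by rw [hL₃]; positivity) hxL₃
  have hDx : D ≤ x ^ θ := by
    rwa [hL₃, one_div, rpow_inv_le_iff_of_pos hD0.le hx0.le hθ0] at hxL₃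
  have hbound : -3 * c₂ ≤ c₁ * θ * x ^ θ := by
    rw [hL₁, one_div, rpow_inv_le_iff_of_pos (div_nonneg (by linarith) (by positivity)) hx0.le
      hθ0, div_le_iff₀ (by positivity)] at hxL₁
    linarith
  have hstep_le : D * x ^ (1 - θ) ≤ x := by
    calc D * x ^ (1 - θ) ≤ x ^ θ * x ^ (1 - θ) := by gcongr
      _ = x := by rw [← rpow_add hx0]; simp
  have hstep_pos : 0 < D * x ^ (1 - θ) := by positivity
  have hgain : 2 / 3 * (c₁ * θ * (2 * x) ^ (θ - 1)) * (x + D * x ^ (1 - θ) - x) = 4 / 3 := by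
    rw [mul_rpow zero_le_two hx0.le, hD, add_sub_cancel_left]
    field_simp
    rw [mul_assoc, ← rpow_add hx0]
    norm_num
  have hincr := powLog_sub_ge (c₃ := c₃) (y := x + D * x ^ (1 - θ)) hθ0 hθ1.le hc₁.le hx0
    (by linarith) (by linarith) hbound
  rwa [hgain] at hincr
end

section
/- Let g: ℕ → ℝ with g(n) = c₁ n^θ + c₂ log(n) + c₃ + E(n), where 0 < θ < 1, c₁ > 0, c₂ < 0, c₃ ∈ ℝ, and |E(n)| ≤ c₄ n^{-θ} for all n ≥ K (with c₄ > 0, K ≥ 1). Let δ > 0 and [a, a+δ) ⊆ [0,1). Set L₁ = ((-3c₂)/(c₁θ))^{1/θ}, L₂ = (3c₄/δ)^{1/θ}, D = 2/(c₁ 2^{θ-1} θ), L₃ = D^{1/θ}, L₄ = (3c₁θ/δ)^{1/(1-θ)}. Then there exists an integer s with K ≤ s ≤ 2·max{K, L₁, L₂+1, L₃, L₄} such that the fractional part of g(s) lies in (a, a+δ). -/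
open Real Set

/-- MVT bound: for `0 < x ≤ y` and `0 < θ < 1`, `y^θ - x^θ ≤ θ x^(θ-1) (y-x)`. -/
lemma eqf_mvt {θ x y : ℝ} (hθ0 : 0 < θ) (hθ1 : θ < 1)
    (hx : 0 < x) (hxy : x ≤ y) :
    y ^ θ - x ^ θ ≤ θ * x ^ (θ - 1) * (y - x) := by
  rcases eq_or_lt_of_le hxy with rfl | hlt
  · simp
  have hcont : ContinuousOn (fun t : ℝ => t ^ θ) (Set.Icc x y) := by
    intro t ht
    exact (Real.continuousAt_rpow_const t θ
      (Or.inl (ne_of_gt (lt_of_lt_of_le hx ht.1)))).continuousWithinAt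
  have hderiv : ∀ t ∈ Set.Ioo x y, HasDerivAt (fun t : ℝ => t ^ θ) (θ * t ^ (θ - 1)) t := by
    intro t ht
    exact Real.hasDerivAt_rpow_const (Or.inl (ne_of_gt (lt_trans hx ht.1)))
  obtain ⟨c, hc, hceq⟩ := exists_hasDerivAt_eq_slope (fun t : ℝ => t ^ θ)
    (fun t => θ * t ^ (θ - 1)) hlt hcont hderiv
  have hyx : 0 < y - x := by linarith
  have h1 : y ^ θ - x ^ θ = θ * c ^ (θ - 1) * (y - x) := by
    rw [hceq]; field_simp
  have h2 : c ^ (θ - 1) ≤ x ^ (θ - 1) :=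
    Real.rpow_le_rpow_of_nonpos hx hc.1.le (by linarith)
  calc y ^ θ - x ^ θ = θ * c ^ (θ - 1) * (y - x) := h1
    _ ≤ θ * x ^ (θ - 1) * (y - x) := by
        apply mul_le_mul_of_nonneg_right _ hyx.le
        exact mul_le_mul_of_nonneg_left h2 hθ0.le

/-- unrounding: `A^(1/p) ≤ M → A ≤ M^p`. -/
lemma eqf_unpow {A M p : ℝ} (hA : 0 ≤ A) (hp : 0 < p) (h : A ^ (1/p) ≤ M) : A ≤ M ^ p := by
  have h2 : (A ^ (1/p)) ^ p ≤ M ^ p :=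
    Real.rpow_le_rpow (Real.rpow_nonneg hA _) h hp.le
  rwa [← Real.rpow_mul hA, one_div_mul_cancel hp.ne', Real.rpow_one] at h2

lemma eqf_pow_unpow {A p : ℝ} (hA : 0 ≤ A) (hp : 0 < p) : (A ^ (1/p)) ^ p = A := by
  rw [← Real.rpow_mul hA, one_div_mul_cancel hp.ne', Real.rpow_one]

/-- Key analytic inequality: `3c(e^x - 1) ≥ x(c + e^x)` for `0 ≤ x ≤ c = log 2`. -/
lemma eqf_exp_key {x : ℝ} (hx0 : 0 ≤ x) (hxc : x ≤ Real.log 2) :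
    x * (Real.log 2 + Real.exp x) ≤ 3 * Real.log 2 * (Real.exp x - 1) := by
  set c := Real.log 2 with hc
  have hclb : 0.6931471803 < c := Real.log_two_gt_d9
  have hcub : c < 0.6931471808 := Real.log_two_lt_d9
  have hx1 : |x| ≤ 1 := by rw [abs_of_nonneg hx0]; linarith
  have hb := Real.exp_bound hx1 (by norm_num : 0 < 4)
  rw [abs_of_nonneg hx0] at hb
  have hsum : ∑ m ∈ Finset.range 4, x ^ m / m.factorial = 1 + x + x^2/2 + x^3/6 := by
    simp [Finset.sum_range_succ, Nat.factorial]
  rw [hsum] at hb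
  norm_num [Nat.factorial] at hb
  have hb1 : Real.exp x ≥ 1 + x + x^2/2 + x^3/6 - x^4 * (5/96) := by
    have := abs_sub_le_iff.mp hb
    linarith [this.2]
  have hb2 : Real.exp x ≤ 1 + x + x^2/2 + x^3/6 + x^4 * (5/96) := by
    have := abs_sub_le_iff.mp hb
    linarith [this.1]
  have hx2 : x^2 ≤ 0.481 := by nlinarith
  have hx3 : x^3 ≤ 0.334 := by nlinarith
  have hx4 : x^4 ≤ 0.232 := by nlinarith
  nlinarith [mul_nonneg hx0 hx0, mul_nonneg (mul_nonneg hx0 hx0) hx0,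
    mul_le_mul_of_nonneg_left hx2 hx0, mul_le_mul_of_nonneg_left hx3 hx0,
    mul_le_mul_of_nonneg_left hx4 hx0]

/-- The φ inequality: `2^θ - 1 - θ log 2 / 3 ≥ (2/3) θ 2^(θ-1)` for `0 < θ < 1`. -/
lemma eqf_phi {θ : ℝ} (hθ0 : 0 < θ) (hθ1 : θ < 1) :
    2/3 * (θ * (2:ℝ) ^ (θ - 1)) ≤ (2:ℝ) ^ θ - 1 - θ * Real.log 2 / 3 := by
  set c := Real.log 2 with hc
  have hcpos : 0 < c := Real.log_pos one_lt_two
  set x := c * θ with hx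
  have h2θ : (2:ℝ) ^ θ = Real.exp x := by
    rw [Real.rpow_def_of_pos (by norm_num : (0:ℝ) < 2)]
  have h2θ1 : (2:ℝ) ^ (θ - 1) = Real.exp x / 2 := by
    rw [Real.rpow_sub (by norm_num : (0:ℝ) < 2), h2θ, Real.rpow_one]
  have hx0 : 0 ≤ x := by positivity
  have hxc : x ≤ c := by nlinarith
  have key := eqf_exp_key hx0 hxc
  rw [h2θ, h2θ1]
  -- goal : 2/3 * (θ * (exp x / 2)) ≤ exp x - 1 - θ * c / 3
  -- key : x * (c + exp x) ≤ 3 * c * (exp x - 1), x = c * θ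
  have hexp : 0 < Real.exp x := Real.exp_pos x
  nlinarith [key, hcpos, mul_pos hcpos hexp, hθ0.le]

set_option maxHeartbeats 1000000 in
theorem equidistribution_framework (θ c₁ c₂ c₃ c₄ δ a K : ℝ)
    (g E : ℕ → ℝ)
    (hθ0 : 0 < θ) (hθ1 : θ < 1) (hc₁ : 0 < c₁) (hc₂ : c₂ < 0) (hc₄ : 0 < c₄)
    (hK : 1 ≤ K) (hδ : 0 < δ) (ha : 0 ≤ a) (haδ : a + δ ≤ 1)
    (hg : ∀ n : ℕ, g n = c₁ * (n : ℝ) ^ θ + c₂ * Real.log n + c₃ + E n)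
    (hE : ∀ n : ℕ, K ≤ (n : ℝ) → |E n| ≤ c₄ * (n : ℝ) ^ (-θ)) :
    ∃ s : ℕ, K ≤ (s : ℝ) ∧
      (s : ℝ) ≤ 2 * max K (max (((-3 * c₂) / (c₁ * θ)) ^ (1 / θ))
        (max ((3 * c₄ / δ) ^ (1 / θ) + 1)
          (max ((2 / (c₁ * 2 ^ (θ - 1) * θ)) ^ (1 / θ))
            ((3 * c₁ * θ / δ) ^ (1 / (1 - θ)))))) ∧
      Int.fract (g s) ∈ Set.Ioo a (a + δ) := by
  classical
  have hδ1 : δ ≤ 1 := by linarith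
  set c := Real.log 2 with hcdef
  have hcpos : 0 < c := Real.log_pos one_lt_two
  set L₁ : ℝ := ((-3 * c₂) / (c₁ * θ)) ^ (1 / θ) with hL₁
  set L₂ : ℝ := (3 * c₄ / δ) ^ (1 / θ) with hL₂
  set L₃ : ℝ := (2 / (c₁ * 2 ^ (θ - 1) * θ)) ^ (1 / θ) with hL₃
  set L₄ : ℝ := (3 * c₁ * θ / δ) ^ (1 / (1 - θ)) with hL₄
  set M : ℝ := max K (max L₁ (max (L₂ + 1) (max L₃ L₄))) with hMdef
  have hKM : K ≤ M := le_max_left _ _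
  have hL₁le : L₁ ≤ M := le_max_of_le_right (le_max_left _ _)
  have hL₂M : L₂ + 1 ≤ M :=
    le_max_of_le_right (le_max_of_le_right (le_max_left _ _))
  have hL₃le : L₃ ≤ M :=
    le_max_of_le_right (le_max_of_le_right (le_max_of_le_right (le_max_left _ _)))
  have hL₄le : L₄ ≤ M :=
    le_max_of_le_right (le_max_of_le_right (le_max_of_le_right (le_max_right _ _)))
  have hM1 : 1 ≤ M := le_trans hK hKM
  have hMpos : (0:ℝ) < M := by linarith
  have h2pos : (0:ℝ) < (2:ℝ) ^ (θ - 1) := Real.rpow_pos_of_pos (by norm_num) _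
  have hMθpos : 0 < M ^ θ := Real.rpow_pos_of_pos hMpos θ
  -- L₁ consequence : -c₂ ≤ c₁ * θ * M ^ θ / 3
  have hL₁M : -c₂ ≤ c₁ * θ * M ^ θ / 3 := by
    have h0 : (0:ℝ) ≤ (-3 * c₂) / (c₁ * θ) := by
      apply div_nonneg (by linarith) (by positivity)
    have h1 : (-3 * c₂) / (c₁ * θ) ≤ M ^ θ := eqf_unpow h0 hθ0 hL₁le
    rw [div_le_iff₀ (by positivity : (0:ℝ) < c₁ * θ)] at h1
    linarith
  -- L₃ consequence : 2 ≤ c₁ * 2^(θ-1) * θ * M^θ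
  have hL₃M : 2 ≤ c₁ * (2:ℝ) ^ (θ - 1) * θ * M ^ θ := by
    have h0 : (0:ℝ) ≤ 2 / (c₁ * 2 ^ (θ - 1) * θ) := by positivity
    have h1 : 2 / (c₁ * (2:ℝ) ^ (θ - 1) * θ) ≤ M ^ θ := eqf_unpow h0 hθ0 hL₃le
    rw [div_le_iff₀ (by positivity : (0:ℝ) < c₁ * 2 ^ (θ - 1) * θ)] at h1
    linarith
  -- L₄ consequence : c₁ * θ * M ^ (θ - 1) ≤ δ / 3
  have hL₄M : c₁ * θ * M ^ (θ - 1) ≤ δ / 3 := by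
    have h0 : (0:ℝ) ≤ 3 * c₁ * θ / δ := by positivity
    have h1 : 3 * c₁ * θ / δ ≤ M ^ (1 - θ) := eqf_unpow h0 (by linarith) hL₄le
    have hPpos : 0 < M ^ (1 - θ) := Real.rpow_pos_of_pos hMpos _
    have h2 : M ^ (θ - 1) = (M ^ (1 - θ))⁻¹ := by
      rw [show θ - 1 = -(1 - θ) by ring, Real.rpow_neg hMpos.le]
    rw [h2, ← div_eq_mul_inv, div_le_div_iff₀ hPpos (by norm_num : (0:ℝ) < 3)]
    rw [div_le_iff₀ hδ] at h1
    linarith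
  -- E bound: for any n with M ≤ n
  have hEn : ∀ n : ℕ, M ≤ (n : ℝ) → |E n| < δ / 3 := by
    intro n hn
    have hnpos : (0:ℝ) < (n:ℝ) := lt_of_lt_of_le hMpos hn
    have hL₂0 : (0:ℝ) ≤ L₂ := by rw [hL₂]; positivity
    have h1 : (3 * c₄ / δ) < (n:ℝ) ^ θ := by
      have h2 : L₂ ^ θ < (n:ℝ) ^ θ :=
        Real.rpow_lt_rpow hL₂0 (by linarith) hθ0
      rwa [hL₂, eqf_pow_unpow (by positivity) hθ0] at h2
    have h3 : c₄ * (n:ℝ) ^ (-θ) < δ / 3 := by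
      rw [Real.rpow_neg hnpos.le, ← div_eq_mul_inv]
      rw [div_lt_iff₀ (by positivity : (0:ℝ) < (n:ℝ) ^ θ)]
      rw [div_lt_iff₀ hδ] at h1
      nlinarith
    exact lt_of_le_of_lt (hE n (le_trans hKM hn)) h3
  clear_value L₁ L₂ L₃ L₄ c
  clear hL₁ hL₃ hL₄ hL₁le hL₃le hL₄le
  clear_value M
  clear hMdef hL₂ hL₂M
  -- setup N, e
  set N : ℕ := ⌈M⌉₊ with hNdef
  set e : ℕ := ⌊2*M⌋₊ with hedef
  have hMN : M ≤ (N:ℝ) := Nat.le_ceil M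
  have hNM : (N:ℝ) < M + 1 := Nat.ceil_lt_add_one (by linarith)
  have he2M : (e:ℝ) ≤ 2*M := Nat.floor_le (by linarith)
  have h2Me : 2*M < (e:ℝ) + 1 := Nat.lt_floor_add_one _
  have hMe : M ≤ (e:ℝ) := by linarith
  have hNe : N ≤ e := Nat.ceil_le.mpr hMe
  have hNpos : (0:ℝ) < (N:ℝ) := lt_of_lt_of_le hMpos hMN
  have hepos : (0:ℝ) < (e:ℝ) := lt_of_lt_of_le hMpos hMe
  clear_value N e
  -- step bound
  have hstep : ∀ n : ℕ, N ≤ n → n < e → g (n+1) - g n < δ := by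
    intro n hn hne
    have hMn : M ≤ (n:ℝ) := le_trans hMN (by exact_mod_cast hn)
    have hnpos : (0:ℝ) < (n:ℝ) := lt_of_lt_of_le hMpos hMn
    have hcast : ((n+1 : ℕ) : ℝ) = (n:ℝ) + 1 := by push_cast; ring
    have h1 : ((n:ℝ)+1) ^ θ - (n:ℝ) ^ θ ≤ θ * (n:ℝ) ^ (θ - 1) * 1 := by
      have := eqf_mvt hθ0 hθ1 hnpos (by linarith : (n:ℝ) ≤ (n:ℝ)+1)
      simpa using this
    have h2 : (n:ℝ) ^ (θ - 1) ≤ M ^ (θ - 1) :=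
      Real.rpow_le_rpow_of_nonpos hMpos hMn (by linarith)
    have hmain : c₁ * (((n:ℝ)+1) ^ θ - (n:ℝ) ^ θ) ≤ δ / 3 := by
      have h3 : c₁ * (((n:ℝ)+1) ^ θ - (n:ℝ) ^ θ) ≤ c₁ * (θ * M ^ (θ-1) * 1) := by
        apply mul_le_mul_of_nonneg_left _ hc₁.le
        refine le_trans h1 ?_
        apply mul_le_mul_of_nonneg_right _ (by norm_num)
        exact mul_le_mul_of_nonneg_left h2 hθ0.le
      calc c₁ * (((n:ℝ)+1) ^ θ - (n:ℝ) ^ θ) ≤ c₁ * (θ * M ^ (θ-1) * 1) := h3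
        _ = c₁ * θ * M ^ (θ-1) := by ring
        _ ≤ δ / 3 := hL₄M
    have hlog : c₂ * Real.log ((n:ℝ)+1) - c₂ * Real.log (n:ℝ) ≤ 0 := by
      have h4 : Real.log (n:ℝ) ≤ Real.log ((n:ℝ)+1) :=
        Real.log_le_log hnpos (by linarith)
      have := mul_le_mul_of_nonpos_left h4 hc₂.le
      linarith
    have ha1 := abs_lt.mp (hEn n hMn)
    have ha2 := abs_lt.mp (hEn (n+1) (by rw [hcast]; linarith))
    rw [hg (n+1), hg n, hcast]
    linarith
  -- total increase
  have hT : 1 - δ < g e - g N := by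
    have hcast2 : (2*M) ^ θ = 2 ^ θ * M ^ θ := Real.mul_rpow (by norm_num) hMpos.le
    have hi1 : (2*M) ^ θ - (e:ℝ) ^ θ ≤ θ * M ^ (θ-1) * 1 := by
      have h1 := eqf_mvt hθ0 hθ1 hepos he2M
      have h2 : (e:ℝ) ^ (θ-1) ≤ M ^ (θ-1) :=
        Real.rpow_le_rpow_of_nonpos hMpos hMe (by linarith)
      refine le_trans h1 ?_
      apply mul_le_mul (mul_le_mul_of_nonneg_left h2 hθ0.le) (by linarith) (by linarith)
      positivity
    have hi2 : (N:ℝ) ^ θ - M ^ θ ≤ θ * M ^ (θ-1) * 1 := by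
      have h1 := eqf_mvt hθ0 hθ1 hMpos hMN
      refine le_trans h1 ?_
      apply mul_le_mul_of_nonneg_left (by linarith) (by positivity)
    have hi3 : Real.log (e:ℝ) - Real.log (N:ℝ) ≤ c := by
      have h1 : Real.log (e:ℝ) ≤ Real.log (2 * (N:ℝ)) :=
        Real.log_le_log hepos (by linarith)
      rw [Real.log_mul (by norm_num) (ne_of_gt hNpos), ← hcdef] at h1
      linarith
    have hi3' : c₂ * c ≤ c₂ * (Real.log (e:ℝ) - Real.log (N:ℝ)) :=
      mul_le_mul_of_nonpos_left hi3 hc₂.le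
    have hi3'' : -(c₁ * θ * M ^ θ / 3 * c) ≤ c₂ * c := by
      linarith [mul_le_mul_of_nonneg_right hL₁M hcpos.le]
    have hE1 := abs_lt.mp (hEn N hMN)
    have hE2 := abs_lt.mp (hEn e hMe)
    have hphi := eqf_phi hθ0 hθ1
    rw [← hcdef] at hphi
    have hkey : 4/3 ≤ c₁ * M ^ θ * ((2:ℝ) ^ θ - 1 - θ * c / 3) := by
      have h1 : c₁ * M ^ θ * (2/3 * (θ * (2:ℝ) ^ (θ-1))) ≤
          c₁ * M ^ θ * ((2:ℝ) ^ θ - 1 - θ * c / 3) :=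
        mul_le_mul_of_nonneg_left hphi (by positivity)
      have h2 : c₁ * M ^ θ * (2/3 * (θ * (2:ℝ) ^ (θ-1))) =
          2/3 * (c₁ * (2:ℝ) ^ (θ-1) * θ * M ^ θ) := by ring
      rw [h2] at h1
      linarith
    have hkey2 : c₁ * M ^ θ * ((2:ℝ) ^ θ - 1 - θ * c / 3) =
        c₁ * M ^ θ * ((2:ℝ) ^ θ - 1) - c₁ * θ * M ^ θ / 3 * c := by ring
    have hmain : c₁ * M ^ θ * ((2:ℝ) ^ θ - 1) - 2 * (c₁ * θ * M ^ (θ-1)) ≤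
        c₁ * ((e:ℝ) ^ θ - (N:ℝ) ^ θ) := by
      have h1 : c₁ * M ^ θ * ((2:ℝ) ^ θ - 1) - 2 * (c₁ * θ * M ^ (θ-1)) =
          c₁ * ((2 ^ θ * M ^ θ - θ * M ^ (θ-1) * 1) - (M ^ θ + θ * M ^ (θ-1) * 1)) := by
        ring
      rw [h1]
      apply mul_le_mul_of_nonneg_left _ hc₁.le
      rw [← hcast2]
      linarith
    have hsplit : c₁ * ((e:ℝ) ^ θ - (N:ℝ) ^ θ) =
        c₁ * (e:ℝ) ^ θ - c₁ * (N:ℝ) ^ θ := by ring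
    have hc₂c : c₂ * (Real.log (e:ℝ) - Real.log (N:ℝ)) =
        c₂ * Real.log (e:ℝ) - c₂ * Real.log (N:ℝ) := by ring
    rw [hg e, hg N]
    linarith
  -- the crossing argument
  set m : ℤ := ⌊g N - a - δ⌋ + 1 with hmdef
  set t : ℝ := (m:ℝ) + a with htdef
  have hfl1 : (⌊g N - a - δ⌋ : ℝ) ≤ g N - a - δ := Int.floor_le _
  have hfl2 : g N - a - δ < (⌊g N - a - δ⌋ : ℝ) + 1 := Int.lt_floor_add_one _
  have ht1 : g N < t + δ := by
    rw [htdef, hmdef]; push_cast; linarith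
  have ht2 : t ≤ g N + 1 - δ := by
    rw [htdef, hmdef]; push_cast; linarith
  have hte : t < g e := by linarith
  have hex : ∃ n : ℕ, (N ≤ n ∧ n ≤ e) ∧ t < g n := ⟨e, ⟨hNe, le_rfl⟩, hte⟩
  obtain ⟨⟨hnN, hne⟩, hgn⟩ := Nat.find_spec hex
  set n := Nat.find hex with hndef
  have hupper : g n < t + δ := by
    rcases eq_or_lt_of_le hnN with heq | hlt
    · rw [← heq]; exact ht1
    · have hmin := Nat.find_min hex (m := n - 1) (by omega)
      push_neg at hmin
      have hgle : g (n - 1) ≤ t := hmin ⟨by omega, by omega⟩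
      have hst := hstep (n - 1) (by omega) (by omega)
      have hn1 : n - 1 + 1 = n := by omega
      rw [hn1] at hst
      linarith
  refine ⟨n, ?_, ?_, ?_⟩
  · have h1 : (N:ℝ) ≤ (n:ℝ) := by exact_mod_cast hnN
    linarith
  · have h1 : (n:ℝ) ≤ (e:ℝ) := by exact_mod_cast hne
    calc (n:ℝ) ≤ (e:ℝ) := h1
      _ ≤ 2 * M := he2M
  · have hma : (m:ℝ) ≤ t := by rw [htdef]; linarith
    have hflr : ⌊g n⌋ = m := by
      rw [Int.floor_eq_iff]
      constructor
      · linarith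
      · push_cast
        rw [htdef] at hupper
        linarith
    rw [Set.mem_Ioo]
    rw [Int.fract, hflr]
    constructor
    · rw [htdef] at hgn; push_cast; linarith
    · rw [htdef] at hupper; push_cast; linarith
end
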